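/- Induced strategy dynamics of EXP-D-RL: let ε > 0, γ > 0, let u : ℝ → ℝⁿ be continuous and let z : ℝ → ℝⁿ be differentiable with ż_i(t) = γ(u_i(t) − z_i(t)) for all t and all i. Define x(t) = σ_ε(z(t)). Then x is differentiable and for all t and all i, ẋ_i(t) = γε⁻¹·[x_i(t)·(u_i(t) − Σ_{j=1}^n x_j(t)·u_j(t)) − x_i(t)·(z_i(t) − Σ_{j=1}^n x_j(t)·z_j(t))]. -/

import Mathlib

/-! Since `σ_ε(z)_i` is a quotient of exponentials, the quotient rule gives
`ẋ_i = ε⁻¹ x_i (ż_i − Σ_j x_j ż_j)` along any differentiable score path `z`.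
Substituting `ż = γ (u − z)` and splitting the sum yields the stated dynamics. -/

/-- The soft-max function with temperature `ε`. -/
noncomputable def softmax (ε : ℝ) {n : ℕ} (z : Fin n → ℝ) : Fin n → ℝ :=
  fun i => Real.exp (z i / ε) / ∑ j, Real.exp (z j / ε)

open Finset

lemma sum_exp_div_pos (ε : ℝ) {n : ℕ} (z : Fin n → ℝ) (i : Fin n) :
    0 < ∑ j, Real.exp (z j / ε) :=
  sum_pos (fun _ _ => Real.exp_pos _) ⟨i, mem_univ i⟩

lemma sum_softmax_mul (ε : ℝ) {n : ℕ} (z w : Fin n → ℝ) :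
    ∑ j, softmax ε z j * w j = (∑ j, Real.exp (z j / ε) * w j) / ∑ j, Real.exp (z j / ε) := by
  rw [sum_div]
  exact sum_congr rfl fun j _ => div_mul_eq_mul_div _ _ _

theorem hasDerivAt_softmax_comp (ε : ℝ) {n : ℕ} {z : ℝ → Fin n → ℝ} {w : Fin n → ℝ} {t : ℝ}
    (hz : ∀ j, HasDerivAt (fun s => z s j) (w j) t) (i : Fin n) :
    HasDerivAt (fun s => softmax ε (z s) i)
      (ε⁻¹ * softmax ε (z t) i * (w i - ∑ j, softmax ε (z t) j * w j)) t := by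
  have hexp : ∀ j, HasDerivAt (fun s => Real.exp (z s j / ε))
      (Real.exp (z t j / ε) * (w j / ε)) t := fun j => ((hz j).div_const ε).exp
  have hD := (sum_exp_div_pos ε (z t) i).ne'
  refine ((hexp i).fun_div (HasDerivAt.fun_sum fun j _ => hexp j) hD).congr_deriv ?_
  rw [sum_softmax_mul]
  simp only [softmax, mul_div_assoc', ← sum_div]
  field_simp

theorem induced_strategy_dynamics_general (ε γ : ℝ) (n : ℕ)
    (u z : ℝ → Fin n → ℝ)
    (hz : ∀ t i, HasDerivAt (fun s => z s i) (γ * (u t i - z t i)) t) :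
    ∀ t i, HasDerivAt (fun s => softmax ε (z s) i)
      (γ * ε⁻¹ *
        (softmax ε (z t) i * (u t i - ∑ j, softmax ε (z t) j * u t j) -
          softmax ε (z t) i * (z t i - ∑ j, softmax ε (z t) j * z t j))) t := by
  intro t i
  refine (hasDerivAt_softmax_comp ε (hz t) i).congr_deriv ?_
  simp only [mul_sub, mul_left_comm _ γ, ← mul_sum, sum_sub_distrib]
  ring

/-- Induced strategy dynamics of EXP-D-RL: if `ż_i = γ(u_i − z_i)` and
`x(t) = σ_ε(z(t))`, then `x` is differentiable with
`ẋ_i = γ ε⁻¹ [x_i (u_i − Σ_j x_j u_j) − x_i (z_i − Σ_j x_j z_j)]`. -/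
theorem induced_strategy_dynamics (ε γ : ℝ) (hε : 0 < ε) (hγ : 0 < γ) (n : ℕ)
    (u z : ℝ → Fin n → ℝ) (hu_cont : Continuous u)
    (hz : ∀ t i, HasDerivAt (fun s => z s i) (γ * (u t i - z t i)) t) :
    ∀ t i, HasDerivAt (fun s => softmax ε (z s) i)
      (γ * ε⁻¹ *
        (softmax ε (z t) i * (u t i - ∑ j, softmax ε (z t) j * u t j) -
          softmax ε (z t) i * (z t i - ∑ j, softmax ε (z t) j * z t j))) t :=
  induced_strategy_dynamics_general ε γ n u z hz
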